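/- Let α ∈ (0,1), c₁ > 0. Define M₁(p,y) = (1/Γ(1-α)) ∫_y^p (1 - p^{-2/α} μ^{2/α})^{-α} dμ for 0 ≤ y ≤ p, and recursively Mₙ(p,y) = ∫_y^p M₁(a,y) M_{n-1}(p,a) da for n ≥ 2. Then for every n ≥ 2 and 0 ≤ y ≤ p, 0 ≤ Mₙ(p,y) ≤ [ (Γ(1+α/2)/Γ(1-α/2)) p ]ⁿ · p^{n-1}/(n-1)!. -/

import Mathlib

/-!
Substituting `μ = p u` and then `u = t ^ (α/2)` turns `M₁(p,0)` into `p / Γ(1-α)` times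
`(α/2) B(α/2, 1-α)`, so `M₁(p,0) = Γ(1+α/2)/Γ(1-α/2) · p =: C p`; as the integrand is
nonnegative, `0 ≤ M₁(p,y) ≤ M₁(p,0)`. Inside the recursion `M₁(a,y) ≤ C a ≤ C p`, and integrating
the induction hypothesis `Mₙ(p,a) ≤ (C p)ⁿ (p-a)^(n-1)/(n-1)!` over `a ∈ [y,p]` gives
`Mₙ₊₁(p,y) ≤ (C p)ⁿ⁺¹ (p-y)ⁿ/n!`; finally `p - y ≤ p`.
-/

open Real MeasureTheory intervalIntegral Set Filter Topology

/-- `M₁(p,y) = (1/Γ(1-α)) ∫_y^p (1 - p^{-2/α} μ^{2/α})^{-α} dμ`. -/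
noncomputable def Mone (α p y : ℝ) : ℝ :=
  (1 / Real.Gamma (1 - α)) * ∫ μ in y..p, (1 - p ^ (-(2/α)) * μ ^ (2/α)) ^ (-α)

/-- The kernels `Mₙ`, defined recursively by
`Mₙ(p,y) = ∫_y^p M₁(a,y) M_{n-1}(p,a) da` for `n ≥ 2` (with `M 0 := 0`, unused). -/
noncomputable def Mker (α : ℝ) : ℕ → ℝ → ℝ → ℝ
  | 0 => fun _ _ => 0
  | 1 => fun p y => Mone α p y
  | (n+2) => fun p y => ∫ a in y..p, Mone α a y * Mker α (n+1) p a

lemma betaIntegrand_eq_ofReal {a b x : ℝ} (hx : x ∈ uIcc (0 : ℝ) 1) :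
    (x : ℂ) ^ ((a : ℂ) - 1) * (1 - (x : ℂ)) ^ ((b : ℂ) - 1) =
      ((x ^ (a - 1) * (1 - x) ^ (b - 1) : ℝ) : ℂ) := by
  rw [uIcc_of_le zero_le_one] at hx
  rw [Complex.ofReal_mul, Complex.ofReal_cpow hx.1, Complex.ofReal_cpow (sub_nonneg.2 hx.2)]
  push_cast
  ring

lemma intervalIntegrable_rpow_mul_one_sub_rpow {a b : ℝ} (ha : 0 < a) (hb : 0 < b) :
    IntervalIntegrable (fun x : ℝ => x ^ (a - 1) * (1 - x) ^ (b - 1)) volume 0 1 := by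
  have h := (Complex.betaIntegral_convergent (u := a) (v := b) (by simpa) (by simpa)).congr
    (fun x hx => betaIntegrand_eq_ofReal (uIoc_subset_uIcc hx))
  simp only [IntervalIntegrable, IntegrableOn] at h ⊢
  exact ⟨by simpa using h.1.re, by simp⟩

lemma integral_rpow_mul_one_sub_rpow {a b : ℝ} (ha : 0 < a) (hb : 0 < b) :
    ∫ x in (0 : ℝ)..1, x ^ (a - 1) * (1 - x) ^ (b - 1) = Gamma a * Gamma b / Gamma (a + b) := by
  have h := Complex.Gamma_mul_Gamma_eq_betaIntegral (s := a) (t := b) (by simpa) (by simpa)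
  rw [Complex.betaIntegral, integral_congr fun x hx => betaIntegrand_eq_ofReal hx,
    integral_ofReal, ← Complex.ofReal_add, Complex.Gamma_ofReal, Complex.Gamma_ofReal,
    Complex.Gamma_ofReal] at h
  have hΓ : Gamma (a + b) ≠ 0 := (Gamma_pos_of_pos (add_pos ha hb)).ne'
  rw [eq_div_iff hΓ, mul_comm]
  exact_mod_cast h.symm

/- The change of variables `x ↦ x ^ p` is available in Mathlib on `Ioi 0`, so integrals over
`(0, 1)` are moved there as integrals of indicators of `Iio 1`. -/

lemma intervalIntegral_zero_one_eq_setIntegral_Ioi_indicator (f : ℝ → ℝ) :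
    ∫ x in (0 : ℝ)..1, f x = ∫ x in Ioi 0, (Iio 1).indicator f x := by
  rw [integral_of_le zero_le_one, integral_Ioc_eq_integral_Ioo,
    setIntegral_indicator measurableSet_Iio, Ioi_inter_Iio]

lemma intervalIntegrable_zero_one_iff_integrableOn_Ioi_indicator (f : ℝ → ℝ) :
    IntervalIntegrable f volume 0 1 ↔ IntegrableOn ((Iio 1).indicator f) (Ioi 0) := by
  rw [intervalIntegrable_iff_integrableOn_Ioo_of_le zero_le_one,
    integrableOn_indicator_iff measurableSet_Iio, Iio_inter_Ioi]

section
variable {q b : ℝ} (hq : 0 < q)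
include hq

lemma indicator_one_sub_rpow_comp_rpow_inv {x : ℝ} (hx : x ∈ Ioi 0) :
    (|q⁻¹| * x ^ (q⁻¹ - 1)) • (Iio 1).indicator (fun u => (1 - u ^ q) ^ (b - 1)) (x ^ q⁻¹) =
      (Iio 1).indicator (fun x => q⁻¹ * (x ^ (q⁻¹ - 1) * (1 - x) ^ (b - 1))) x := by
  have hx : 0 < x := hx
  have hlt : x ^ q⁻¹ < 1 ↔ x < 1 := rpow_lt_one_iff' hx.le (inv_pos.2 hq)
  simp only [indicator, mem_Iio, hlt, smul_eq_mul, abs_of_pos (inv_pos.2 hq)]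
  split_ifs
  · rw [← rpow_mul hx.le, inv_mul_cancel₀ hq.ne', rpow_one]
    ring
  · simp

lemma intervalIntegrable_one_sub_rpow_rpow (hb : 0 < b) :
    IntervalIntegrable (fun u : ℝ => (1 - u ^ q) ^ (b - 1)) volume 0 1 := by
  rw [intervalIntegrable_zero_one_iff_integrableOn_Ioi_indicator,
    ← integrableOn_Ioi_comp_rpow_iff _ (inv_ne_zero hq.ne'),
    integrableOn_congr_fun (fun x hx => indicator_one_sub_rpow_comp_rpow_inv hq hx)
      measurableSet_Ioi, ← intervalIntegrable_zero_one_iff_integrableOn_Ioi_indicator]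
  exact (intervalIntegrable_rpow_mul_one_sub_rpow (inv_pos.2 hq) hb).const_mul _

lemma integral_one_sub_rpow_rpow (hb : 0 < b) :
    ∫ u in (0 : ℝ)..1, (1 - u ^ q) ^ (b - 1) = Gamma (q⁻¹ + 1) * Gamma b / Gamma (q⁻¹ + b) := by
  rw [intervalIntegral_zero_one_eq_setIntegral_Ioi_indicator,
    ← integral_comp_rpow_Ioi _ (inv_ne_zero hq.ne'),
    setIntegral_congr_fun measurableSet_Ioi fun x hx => indicator_one_sub_rpow_comp_rpow_inv hq hx,
    ← intervalIntegral_zero_one_eq_setIntegral_Ioi_indicator,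
    intervalIntegral.integral_const_mul,
    integral_rpow_mul_one_sub_rpow (inv_pos.2 hq) hb, Gamma_add_one (inv_ne_zero hq.ne')]
  ring

end

lemma integral_sub_pow_div_factorial (n : ℕ) (y p : ℝ) :
    ∫ a in y..p, (p - a) ^ n / n.factorial = (p - y) ^ (n + 1) / (n + 1).factorial := by
  rw [intervalIntegral.integral_div, integral_comp_sub_left (fun x => x ^ n), sub_self,
    integral_pow, Nat.factorial_succ]
  push_cast
  field_simp
  ring

lemma integral_mul_le_of_le_sub_pow {f g : ℝ → ℝ} {y p A K : ℝ} {n : ℕ} (hyp : y ≤ p)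
    (hf : ∀ a ∈ Icc y p, 0 ≤ f a ∧ f a ≤ A)
    (hg : ∀ a ∈ Icc y p, 0 ≤ g a ∧ g a ≤ K * (p - a) ^ n / n.factorial) :
    ∫ a in y..p, f a * g a ≤ A * K * (p - y) ^ (n + 1) / (n + 1).factorial := by
  have hA : 0 ≤ A := (hf y ⟨le_rfl, hyp⟩).1.trans (hf y ⟨le_rfl, hyp⟩).2
  have hbound : ∀ a ∈ Icc y p, f a * g a ≤ A * K * ((p - a) ^ n / n.factorial) := fun a ha => by
    rw [mul_assoc, ← mul_div_assoc]
    exact mul_le_mul (hf a ha).2 (hg a ha).2 (hg a ha).1 hA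
  calc ∫ a in y..p, f a * g a ≤ ∫ a in y..p, A * K * ((p - a) ^ n / n.factorial) := by
        rw [integral_of_le hyp, integral_of_le hyp]
        refine integral_mono_of_nonneg ?_ ?_ ?_
        · exact (ae_restrict_iff' measurableSet_Ioc).2 <| .of_forall fun a ha =>
            mul_nonneg (hf a (Ioc_subset_Icc_self ha)).1 (hg a (Ioc_subset_Icc_self ha)).1
        · exact Continuous.integrableOn_Ioc (by fun_prop)
        · exact (ae_restrict_iff' measurableSet_Ioc).2 <| .of_forall fun a ha =>
            hbound a (Ioc_subset_Icc_self ha)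
    _ = A * K * (p - y) ^ (n + 1) / (n + 1).factorial := by
        rw [intervalIntegral.integral_const_mul, integral_sub_pow_div_factorial, mul_div_assoc]

lemma Mone_eq_mul_integral {α p y : ℝ} (hp : 0 < p) (hy : 0 ≤ y) :
    Mone α p y = p / Gamma (1 - α) * ∫ u in y / p..1, (1 - u ^ (2 / α)) ^ (-α) := by
  have hscale : EqOn (fun μ => (1 - p ^ (-(2 / α)) * μ ^ (2 / α)) ^ (-α))
      (fun μ => (1 - (μ / p) ^ (2 / α)) ^ (-α)) (uIcc y p) := fun μ hμ => by
    have hμ : 0 ≤ μ := (le_min hy hp.le).trans hμ.1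
    dsimp only
    rw [div_rpow hμ hp.le, rpow_neg hp.le, inv_mul_eq_div]
  rw [Mone, integral_congr hscale, integral_comp_div (fun u => (1 - u ^ (2 / α)) ^ (-α)) hp.ne',
    div_self hp.ne', smul_eq_mul]
  ring

section
variable {α : ℝ} (hα0 : 0 < α) (hα1 : α < 1)
include hα0 hα1

lemma integral_one_sub_rpow_two_div :
    ∫ u in (0 : ℝ)..1, (1 - u ^ (2 / α)) ^ (-α) =
      Gamma (1 + α / 2) * Gamma (1 - α) / Gamma (1 - α / 2) := by
  have h := integral_one_sub_rpow_rpow (q := 2 / α) (by positivity) (b := 1 - α) (by linarith)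
  rwa [sub_sub_cancel_left, inv_div, show α / 2 + (1 - α) = 1 - α / 2 by ring, add_comm] at h

lemma intervalIntegrable_one_sub_rpow_two_div :
    IntervalIntegrable (fun u : ℝ => (1 - u ^ (2 / α)) ^ (-α)) volume 0 1 := by
  simpa only [sub_sub_cancel_left] using
    intervalIntegrable_one_sub_rpow_rpow (q := 2 / α) (by positivity) (b := 1 - α) (by linarith)

lemma Mone_nonneg_and_le {p y : ℝ} (hy : 0 ≤ y) (hyp : y ≤ p) :
    0 ≤ Mone α p y ∧ Mone α p y ≤ Gamma (1 + α / 2) / Gamma (1 - α / 2) * p := by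
  rcases (hy.trans hyp).eq_or_lt with rfl | hp
  · obtain rfl : y = 0 := le_antisymm hyp hy
    simp [Mone]
  have hΓ : 0 < Gamma (1 - α) := Gamma_pos_of_pos (by linarith)
  have hnonneg : ∀ u ∈ Icc (0 : ℝ) 1, 0 ≤ (1 - u ^ (2 / α)) ^ (-α) := fun u hu =>
    rpow_nonneg (sub_nonneg.2 (rpow_le_one hu.1 hu.2 (by positivity))) _
  have hyp' : y / p ≤ 1 := (div_le_one hp).2 hyp
  rw [Mone_eq_mul_integral hp hy]
  constructor
  · exact mul_nonneg (by positivity) <| integral_nonneg hyp' fun u hu =>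
      hnonneg u ⟨(div_nonneg hy hp.le).trans hu.1, hu.2⟩
  · calc p / Gamma (1 - α) * ∫ u in y / p..1, (1 - u ^ (2 / α)) ^ (-α)
        ≤ p / Gamma (1 - α) * ∫ u in (0 : ℝ)..1, (1 - u ^ (2 / α)) ^ (-α) := by
          gcongr
          refine integral_mono_interval (div_nonneg hy hp.le) hyp' le_rfl ?_
            (intervalIntegrable_one_sub_rpow_two_div hα0 hα1)
          exact (ae_restrict_iff' measurableSet_Ioc).2 <| .of_forall fun u hu =>
            hnonneg u (Ioc_subset_Icc_self hu)
      _ = Gamma (1 + α / 2) / Gamma (1 - α / 2) * p := by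
          rw [integral_one_sub_rpow_two_div hα0 hα1]
          field_simp

end

lemma Gamma_one_add_div_Gamma_one_sub_pos {x : ℝ} (h₁ : -1 < x) (h₂ : x < 1) :
    0 < Gamma (1 + x) / Gamma (1 - x) :=
  div_pos (Gamma_pos_of_pos (by linarith)) (Gamma_pos_of_pos (by linarith))

lemma Mker_succ_nonneg_and_le {α : ℝ} (hα0 : 0 < α) (hα1 : α < 1) (n : ℕ) {p y : ℝ}
    (hy : 0 ≤ y) (hyp : y ≤ p) :
    0 ≤ Mker α (n + 1) p y ∧
      Mker α (n + 1) p y ≤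
        (Gamma (1 + α / 2) / Gamma (1 - α / 2) * p) ^ (n + 1) * (p - y) ^ n / n.factorial := by
  set C := Gamma (1 + α / 2) / Gamma (1 - α / 2)
  have hC : 0 ≤ C := (Gamma_one_add_div_Gamma_one_sub_pos (by linarith) (by linarith)).le
  induction n generalizing y with
  | zero => simpa [Mker] using Mone_nonneg_and_le hα0 hα1 hy hyp
  | succ n ih =>
    have hMone : ∀ a ∈ Icc y p, 0 ≤ Mone α a y ∧ Mone α a y ≤ C * p := fun a ha =>
      have h := Mone_nonneg_and_le hα0 hα1 hy ha.1
      ⟨h.1, h.2.trans (mul_le_mul_of_nonneg_left ha.2 hC)⟩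
    have hMker : ∀ a ∈ Icc y p, 0 ≤ Mker α (n + 1) p a ∧
        Mker α (n + 1) p a ≤ (C * p) ^ (n + 1) * (p - a) ^ n / n.factorial := fun a ha =>
      ih (hy.trans ha.1) ha.2
    refine ⟨integral_nonneg hyp fun a ha => mul_nonneg (hMone a ha).1 (hMker a ha).1, ?_⟩
    calc Mker α (n + 2) p y = ∫ a in y..p, Mone α a y * Mker α (n + 1) p a := rfl
      _ ≤ C * p * (C * p) ^ (n + 1) * (p - y) ^ (n + 1) / (n + 1).factorial :=
        integral_mul_le_of_le_sub_pow hyp hMone hMker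
      _ = (C * p) ^ (n + 2) * (p - y) ^ (n + 1) / (n + 1).factorial := by ring

theorem stmt4_general (α : ℝ) (hα0 : 0 < α) (hα1 : α < 1) :
    ∀ n : ℕ, 2 ≤ n → ∀ p y : ℝ, 0 ≤ y → y ≤ p →
      0 ≤ Mker α n p y ∧
      Mker α n p y ≤ (Real.Gamma (1 + α/2) / Real.Gamma (1 - α/2) * p) ^ n *
        p ^ (n - 1) / (Nat.factorial (n - 1)) := by
  intro n hn p y hy hyp
  obtain ⟨m, rfl⟩ : ∃ m, n = m + 1 := ⟨n - 1, by omega⟩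
  obtain ⟨hnonneg, hle⟩ := Mker_succ_nonneg_and_le hα0 hα1 m hy hyp
  refine ⟨hnonneg, hle.trans ?_⟩
  rw [Nat.add_sub_cancel]
  have hCp : 0 ≤ Gamma (1 + α / 2) / Gamma (1 - α / 2) * p :=
    mul_nonneg (Gamma_one_add_div_Gamma_one_sub_pos (by linarith) (by linarith)).le (hy.trans hyp)
  gcongr
  linarith

/-- For `n ≥ 2` and `0 ≤ y ≤ p`:
`0 ≤ Mₙ(p,y) ≤ [(Γ(1+α/2)/Γ(1-α/2)) p]ⁿ · p^{n-1}/(n-1)!`. -/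
theorem stmt4 (α c₁ : ℝ) (hα0 : 0 < α) (hα1 : α < 1) (hc₁ : 0 < c₁) :
    ∀ n : ℕ, 2 ≤ n → ∀ p y : ℝ, 0 ≤ y → y ≤ p →
      0 ≤ Mker α n p y ∧
      Mker α n p y ≤ (Real.Gamma (1 + α/2) / Real.Gamma (1 - α/2) * p) ^ n *
        p ^ (n - 1) / (Nat.factorial (n - 1)) :=
  stmt4_general α hα0 hα1
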